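/- arXiv:1509.08030 — 2 statements merged into one kernel-verified Lean document; each statement's English description precedes it below -/
import Mathlib

section
/- For all integers k ≥ 2 and j ≥ 1, the K-span of all brackets ⁅m, l⁆ with m ∈ M_k(A_2) and l ∈ L_j(A_2) is contained in M_{k+j}(A_2), where A_2 is the free associative algebra on two generators over a field of characteristic zero. (That is, [M_k(A_2), L_j(A_2)] ⊆ M_{k+j}(A_2).) -/
/-- Lower central series of an associative unital algebra `R` over `K`, as `K`-submodules:
`lowerCentral K R 1 = ⊤` and, for `i ≥ 1`, `lowerCentral K R (i+1)` is the `K`-linear span of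
the brackets `⁅a, l⁆ = a * l - l * a` with `a : R` and `l ∈ lowerCentral K R i`.
(By convention `lowerCentral K R 0 = ⊤` as well; only indices `i ≥ 1` are used.) -/
def lowerCentral (K : Type*) [CommRing K] (R : Type*) [Ring R] [Algebra K R] : ℕ → Submodule K R
  | 0 => ⊤
  | 1 => ⊤
  | n + 2 => Submodule.span K
      {x : R | ∃ a : R, ∃ l ∈ lowerCentral K R (n + 1), x = a * l - l * a}

/-- `lcsIdeal K R i` is the two-sided ideal `M_i(R)` of `R` generated by `lowerCentral K R i`,
realized as the `K`-submodule spanned by all products `a * l * b` with `a b : R` and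
`l ∈ lowerCentral K R i`.  Products of such ideals are taken using the multiplication of
`Submodule K R` (the span of pairwise products), which agrees with the product of
two-sided ideals. -/
def lcsIdeal (K : Type*) [CommRing K] (R : Type*) [Ring R] [Algebra K R] (i : ℕ) : Submodule K R :=
  Submodule.span K {x : R | ∃ a b : R, ∃ l ∈ lowerCentral K R i, x = a * l * b}

section Infra
variable {K : Type*} [CommRing K] {R : Type*} [Ring R] [Algebra K R]

lemma lc_eq (n : ℕ) : lowerCentral K R (n+2) = Submodule.span K
    {x : R | ∃ a : R, ∃ l ∈ lowerCentral K R (n + 1), x = a * l - l * a} := rfl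

lemma lc_one : lowerCentral K R 1 = ⊤ := rfl

lemma lc_succ_mem {n : ℕ} {l : R} (hl : l ∈ lowerCentral K R (n+1)) (a : R) :
    a * l - l * a ∈ lowerCentral K R (n+2) := by
  rw [lc_eq]; exact Submodule.subset_span ⟨a, l, hl, rfl⟩

lemma mem_lcsIdeal {i : ℕ} {l : R} (hl : l ∈ lowerCentral K R i) (a b : R) :
    a * l * b ∈ lcsIdeal K R i := Submodule.subset_span ⟨a, b, l, hl, rfl⟩

lemma lc_le_lcsIdeal {i : ℕ} {l : R} (hl : l ∈ lowerCentral K R i) : l ∈ lcsIdeal K R i := by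
  simpa using mem_lcsIdeal hl 1 1

lemma lcsIdeal_mul_left {i : ℕ} (a : R) {m : R} (hm : m ∈ lcsIdeal K R i) :
    a * m ∈ lcsIdeal K R i := by
  induction hm using Submodule.span_induction with
  | mem x hx =>
    obtain ⟨a', b', l, hl, rfl⟩ := hx
    have h : a * (a' * l * b') = (a * a') * l * b' := by noncomm_ring
    rw [h]; exact mem_lcsIdeal hl _ _
  | zero => rw [mul_zero]; exact zero_mem _
  | add x y _ _ ihx ihy => rw [mul_add]; exact add_mem ihx ihy
  | smul r x _ ihx => rw [mul_smul_comm]; exact Submodule.smul_mem _ _ ihx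

lemma lcsIdeal_mul_right {i : ℕ} (b : R) {m : R} (hm : m ∈ lcsIdeal K R i) :
    m * b ∈ lcsIdeal K R i := by
  induction hm using Submodule.span_induction with
  | mem x hx =>
    obtain ⟨a', b', l, hl, rfl⟩ := hx
    have h : (a' * l * b') * b = a' * l * (b' * b) := by noncomm_ring
    rw [h]; exact mem_lcsIdeal hl _ _
  | zero => rw [zero_mul]; exact zero_mem _
  | add x y _ _ ihx ihy => rw [add_mul]; exact add_mem ihx ihy
  | smul r x _ ihx => rw [smul_mul_assoc]; exact Submodule.smul_mem _ _ ihx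

lemma comm_smul (u : R) (r : K) (x : R) :
    u * (r • x) - (r • x) * u = r • (u * x - x * u) := by
  rw [mul_smul_comm, smul_mul_assoc, ← smul_sub]

lemma smul_comm' (u : R) (r : K) (x : R) :
    (r • x) * u - u * (r • x) = r • (x * u - u * x) := by
  rw [mul_smul_comm, smul_mul_assoc, ← smul_sub]

end Infra

section Two
variable {K : Type*} [Field K] [CharZero K]

/-- Key antisymmetry lemma (Feigin–Shoikhet / Gupta–Levin style):
for `l ∈ L j`, `[a,b][c,l] + [c,b][a,l] ∈ M (j+2)`. Valid in any algebra. -/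
lemma antisym {R : Type*} [Ring R] [Algebra K R] :
    ∀ (j : ℕ), 1 ≤ j → ∀ a b c l : R, l ∈ lowerCentral K R j →
      (a*b - b*a) * (c*l - l*c) + (c*b - b*c) * (a*l - l*a) ∈ lcsIdeal K R (j+2) := by
  intro j hj
  obtain (rfl | ⟨j', rfl⟩) : j = 1 ∨ ∃ j', j = j' + 2 := by
    rcases j with _ | _ | j'
    · omega
    · exact Or.inl rfl
    · exact Or.inr ⟨j', rfl⟩
  · -- base case j = 1 : l is arbitrary
    intro a b c l _
    have hid : (a*b - b*a) * (c*l - l*c) + (c*b - b*c) * (a*l - l*a)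
        = (a*(b*c - c*b) - (b*c - c*b)*a) * l
          - (a*(b*(c*l) - (c*l)*b) - (b*(c*l) - (c*l)*b)*a)
          + a*(b*(c*l - l*c) - (c*l - l*c)*b)
          + (a*(b*(l*c) - (l*c)*b) - (b*(l*c) - (l*c)*b)*a)
          - (a*((b*l)*c - c*(b*l)) - ((b*l)*c - c*(b*l))*a)
          - ((b*a)*(c*l - l*c) - (c*l - l*c)*(b*a)) := by noncomm_ring
    rw [hid]
    have top : ∀ z : R, z ∈ lowerCentral K R 1 := by intro z; rw [lc_one]; trivial
    have L2 : ∀ q r : R, q*r - r*q ∈ lowerCentral K R 2 := fun q r =>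
      lc_succ_mem (top r) q
    have L3 : ∀ p q r : R, p*(q*r - r*q) - (q*r - r*q)*p ∈ lowerCentral K R 3 := fun p q r =>
      lc_succ_mem (L2 q r) p
    refine sub_mem (sub_mem (add_mem (add_mem (sub_mem ?_ ?_) ?_) ?_) ?_) ?_
    · exact lcsIdeal_mul_right l (lc_le_lcsIdeal (L3 a b c))
    · exact lc_le_lcsIdeal (L3 a b (c*l))
    · exact lcsIdeal_mul_left a (lc_le_lcsIdeal (L3 b c l))
    · exact lc_le_lcsIdeal (L3 a b (l*c))
    · exact lc_le_lcsIdeal (L3 a (b*l) c)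
    · exact lc_le_lcsIdeal (L3 (b*a) c l)
  · -- step case j = j' + 2
    intro a b c l' hl'
    rw [lc_eq] at hl'
    induction hl' using Submodule.span_induction with
    | mem x hx =>
      obtain ⟨e, l, hl, rfl⟩ := hx
      have hid : (a*b - b*a) * (c*(e*l - l*e) - (e*l - l*e)*c)
            + (c*b - b*c) * (a*(e*l - l*e) - (e*l - l*e)*a)
          = a*(b*(c*(e*l - l*e) - (e*l - l*e)*c) - (c*(e*l - l*e) - (e*l - l*e)*c)*b)
            + (a*((c*b)*(e*l - l*e) - (e*l - l*e)*(c*b)) - ((c*b)*(e*l - l*e) - (e*l - l*e)*(c*b))*a)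
            - ((a*c)*(b*(e*l - l*e) - (e*l - l*e)*b) - (b*(e*l - l*e) - (e*l - l*e)*b)*(a*c))
            - ((b*a)*(c*(e*l - l*e) - (e*l - l*e)*c) - (c*(e*l - l*e) - (e*l - l*e)*c)*(b*a))
            + (b*(a*(e*l - l*e) - (e*l - l*e)*a) - (a*(e*l - l*e) - (e*l - l*e)*a)*b)*c
            - ((b*c)*(a*(e*l - l*e) - (e*l - l*e)*a) - (a*(e*l - l*e) - (e*l - l*e)*a)*(b*c))
            + (c*((b*a)*(e*l - l*e) - (e*l - l*e)*(b*a)) - ((b*a)*(e*l - l*e) - (e*l - l*e)*(b*a))*c) := by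
        noncomm_ring
      rw [hid]
      have h1 : e*l - l*e ∈ lowerCentral K R (j'+2) := lc_succ_mem hl e
      have h2 : ∀ q : R, q*(e*l - l*e) - (e*l - l*e)*q ∈ lowerCentral K R (j'+3) := fun q =>
        lc_succ_mem h1 q
      have h3 : ∀ p q : R,
          p*(q*(e*l - l*e) - (e*l - l*e)*q) - (q*(e*l - l*e) - (e*l - l*e)*q)*p
            ∈ lowerCentral K R (j'+4) := fun p q => lc_succ_mem (h2 q) p
      refine add_mem (sub_mem (add_mem (sub_mem (sub_mem (add_mem ?_ ?_) ?_) ?_) ?_) ?_) ?_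
      · exact lcsIdeal_mul_left a (lc_le_lcsIdeal (h3 b c))
      · exact lc_le_lcsIdeal (h3 a (c*b))
      · exact lc_le_lcsIdeal (h3 (a*c) b)
      · exact lc_le_lcsIdeal (h3 (b*a) c)
      · exact lcsIdeal_mul_right c (lc_le_lcsIdeal (h3 b a))
      · exact lc_le_lcsIdeal (h3 (b*c) a)
      · exact lc_le_lcsIdeal (h3 c (b*a))
    | zero =>
      have h0 : (a*b - b*a) * (c*(0:R) - 0*c) + (c*b - b*c) * (a*0 - 0*a) = 0 := by noncomm_ring
      rw [h0]; exact zero_mem _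
    | add x y _ _ ihx ihy =>
      have h : (a*b - b*a) * (c*(x+y) - (x+y)*c) + (c*b - b*c) * (a*(x+y) - (x+y)*a)
          = ((a*b - b*a) * (c*x - x*c) + (c*b - b*c) * (a*x - x*a))
            + ((a*b - b*a) * (c*y - y*c) + (c*b - b*c) * (a*y - y*a)) := by noncomm_ring
      rw [h]; exact add_mem ihx ihy
    | smul r x _ ihx =>
      rw [comm_smul c r x, comm_smul a r x, mul_smul_comm, mul_smul_comm, ← smul_add]
      exact Submodule.smul_mem _ _ ihx


/-- `[x,y] * [c,l] ∈ M (k'+3)` for `l ∈ L (k'+1)`, any `c`.  Uses two generators + char 0. -/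
lemma s2a (k' : ℕ) :
    ∀ c : FreeAlgebra K (Fin 2), ∀ l ∈ lowerCentral K (FreeAlgebra K (Fin 2)) (k'+1),
      (FreeAlgebra.ι K 0 * FreeAlgebra.ι K 1 - FreeAlgebra.ι K 1 * FreeAlgebra.ι K 0)
        * (c*l - l*c) ∈ lcsIdeal K (FreeAlgebra K (Fin 2)) (k'+3) := by
  set X : FreeAlgebra K (Fin 2) := FreeAlgebra.ι K 0 with hX
  set Y : FreeAlgebra K (Fin 2) := FreeAlgebra.ι K 1 with hY
  have h2K : (2 : K) ≠ 0 := two_ne_zero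
  intro c
  induction c using FreeAlgebra.induction with
  | grade0 r =>
    intro l _
    have h : algebraMap K (FreeAlgebra K (Fin 2)) r * l - l * algebraMap K (FreeAlgebra K (Fin 2)) r = 0 := by
      rw [Algebra.commutes, sub_self]
    rw [h, mul_zero]; exact zero_mem _
  | grade1 i =>
    intro l hl
    fin_cases i
    · -- c = X
      have h := antisym (K := K) (k'+1) (by omega) X Y X l hl
      have hE : ((X*Y - Y*X) * (X*l - l*X) + (X*Y - Y*X) * (X*l - l*X))
          = (2:K) • ((X*Y - Y*X) * (X*l - l*X)) := by rw [two_smul]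
      rw [hE] at h
      have h' := Submodule.smul_mem (lcsIdeal K (FreeAlgebra K (Fin 2)) (k'+3)) ((2:K)⁻¹) h
      rwa [inv_smul_smul₀ h2K] at h'
    · -- c = Y
      show (X*Y - Y*X) * (Y*l - l*Y) ∈ lcsIdeal K (FreeAlgebra K (Fin 2)) (k'+3)
      have h := antisym (K := K) (k'+1) (by omega) Y X Y l hl
      have hE : ((Y*X - X*Y) * (Y*l - l*Y) + (Y*X - X*Y) * (Y*l - l*Y))
          = (2:K) • ((Y*X - X*Y) * (Y*l - l*Y)) := by rw [two_smul]
      rw [hE] at h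
      have h' := Submodule.smul_mem (lcsIdeal K (FreeAlgebra K (Fin 2)) (k'+3)) ((2:K)⁻¹) h
      rw [inv_smul_smul₀ h2K] at h'
      have hneg : (X*Y - Y*X) * ((Y : FreeAlgebra K (Fin 2))*l - l*Y)
          = -((Y*X - X*Y) * (Y*l - l*Y)) := by noncomm_ring
      rw [hneg]; exact neg_mem h'
  | mul c₁ c₂ ih₁ ih₂ =>
    intro l hl
    set w : FreeAlgebra K (Fin 2) := X*Y - Y*X with hw
    have hid : w * ((c₁*c₂)*l - l*(c₁*c₂))
        = (w * (c₂*l - l*c₂)) * c₁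
          + w * (c₁*(c₂*l - l*c₂) - (c₂*l - l*c₂)*c₁)
          + (w * (c₁*l - l*c₁)) * c₂ := by noncomm_ring
    rw [hid]
    have hv : c₂*l - l*c₂ ∈ lowerCentral K (FreeAlgebra K (Fin 2)) (k'+2) := lc_succ_mem hl c₂
    have hvv : c₁*(c₂*l - l*c₂) - (c₂*l - l*c₂)*c₁ ∈ lowerCentral K (FreeAlgebra K (Fin 2)) (k'+3) :=
      lc_succ_mem hv c₁
    exact add_mem (add_mem (lcsIdeal_mul_right c₁ (ih₂ l hl))
      (lcsIdeal_mul_left w (lc_le_lcsIdeal hvv))) (lcsIdeal_mul_right c₂ (ih₁ l hl))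
  | add c₁ c₂ ih₁ ih₂ =>
    intro l hl
    set w : FreeAlgebra K (Fin 2) := X*Y - Y*X with hw
    have hid : w * ((c₁+c₂)*l - l*(c₁+c₂))
        = w * (c₁*l - l*c₁) + w * (c₂*l - l*c₂) := by noncomm_ring
    rw [hid]; exact add_mem (ih₁ l hl) (ih₂ l hl)

/-- `[x,y] * λ ∈ M (k'+3)` for `λ ∈ L (k'+2)`. -/
lemma s2b (k' : ℕ) :
    ∀ lam ∈ lowerCentral K (FreeAlgebra K (Fin 2)) (k'+2),
      (FreeAlgebra.ι K 0 * FreeAlgebra.ι K 1 - FreeAlgebra.ι K 1 * FreeAlgebra.ι K 0)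
        * lam ∈ lcsIdeal K (FreeAlgebra K (Fin 2)) (k'+3) := by
  intro lam hlam
  rw [lc_eq] at hlam
  induction hlam using Submodule.span_induction with
  | mem x hx => obtain ⟨c, l, hl, rfl⟩ := hx; exact s2a k' c l hl
  | zero => rw [mul_zero]; exact zero_mem _
  | add x y _ _ ihx ihy => rw [mul_add]; exact add_mem ihx ihy
  | smul r x _ ihx => rw [mul_smul_comm]; exact Submodule.smul_mem _ _ ihx

/-- `[a,b] * λ ∈ M (k'+3)` for `λ ∈ L (k'+2)` and arbitrary `a b`. -/
lemma s2 (k' : ℕ) :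
    ∀ a b : FreeAlgebra K (Fin 2), ∀ lam ∈ lowerCentral K (FreeAlgebra K (Fin 2)) (k'+2),
      (a*b - b*a) * lam ∈ lcsIdeal K (FreeAlgebra K (Fin 2)) (k'+3) := by
  intro a
  induction a using FreeAlgebra.induction with
  | grade0 r =>
    intro b lam _
    have h : algebraMap K (FreeAlgebra K (Fin 2)) r * b - b * algebraMap K (FreeAlgebra K (Fin 2)) r = 0 := by
      rw [Algebra.commutes, sub_self]
    rw [h, zero_mul]; exact zero_mem _
  | grade1 i =>
    intro b
    induction b using FreeAlgebra.induction with
    | grade0 r =>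
      intro lam _
      have h : FreeAlgebra.ι K i * algebraMap K (FreeAlgebra K (Fin 2)) r
          - algebraMap K (FreeAlgebra K (Fin 2)) r * FreeAlgebra.ι K i = 0 := by
        rw [← Algebra.commutes, sub_self]
      rw [h, zero_mul]; exact zero_mem _
    | grade1 i' =>
      intro lam hlam
      fin_cases i <;> fin_cases i'
      · show (FreeAlgebra.ι K 0 * FreeAlgebra.ι K 0 - FreeAlgebra.ι K 0 * FreeAlgebra.ι K 0) * lam
            ∈ lcsIdeal K (FreeAlgebra K (Fin 2)) (k'+3)
        rw [sub_self, zero_mul]; exact zero_mem _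
      · show (FreeAlgebra.ι K 0 * FreeAlgebra.ι K 1 - FreeAlgebra.ι K 1 * FreeAlgebra.ι K 0) * lam
            ∈ lcsIdeal K (FreeAlgebra K (Fin 2)) (k'+3)
        exact s2b k' lam hlam
      · show (FreeAlgebra.ι K 1 * FreeAlgebra.ι K 0 - FreeAlgebra.ι K 0 * FreeAlgebra.ι K 1) * lam
            ∈ lcsIdeal K (FreeAlgebra K (Fin 2)) (k'+3)
        have h : (FreeAlgebra.ι K 1 * FreeAlgebra.ι K 0 - FreeAlgebra.ι K 0 * FreeAlgebra.ι K 1) * lam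
            = -((FreeAlgebra.ι K 0 * FreeAlgebra.ι K 1 - FreeAlgebra.ι K 1 * FreeAlgebra.ι K 0) * lam) := by
          noncomm_ring
        rw [h]; exact neg_mem (s2b k' lam hlam)
      · show (FreeAlgebra.ι K 1 * FreeAlgebra.ι K 1 - FreeAlgebra.ι K 1 * FreeAlgebra.ι K 1) * lam
            ∈ lcsIdeal K (FreeAlgebra K (Fin 2)) (k'+3)
        rw [sub_self, zero_mul]; exact zero_mem _
    | mul b₁ b₂ ih₁ ih₂ =>
      intro lam hlam
      set z : FreeAlgebra K (Fin 2) := FreeAlgebra.ι K i with hz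
      have hid : (z*(b₁*b₂) - (b₁*b₂)*z) * lam
          = b₁*((z*b₂ - b₂*z)*lam) + ((z*b₁ - b₁*z)*lam)*b₂
            + (z*b₁ - b₁*z)*(b₂*lam - lam*b₂) := by noncomm_ring
      rw [hid]
      have hcor : b₂*lam - lam*b₂ ∈ lowerCentral K (FreeAlgebra K (Fin 2)) (k'+3) :=
        lc_succ_mem hlam b₂
      exact add_mem (add_mem (lcsIdeal_mul_left b₁ (ih₂ lam hlam))
        (lcsIdeal_mul_right b₂ (ih₁ lam hlam)))
        (lcsIdeal_mul_left _ (lc_le_lcsIdeal hcor))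
    | add b₁ b₂ ih₁ ih₂ =>
      intro lam hlam
      set z : FreeAlgebra K (Fin 2) := FreeAlgebra.ι K i with hz
      have hid : (z*(b₁+b₂) - (b₁+b₂)*z) * lam
          = (z*b₁ - b₁*z)*lam + (z*b₂ - b₂*z)*lam := by noncomm_ring
      rw [hid]; exact add_mem (ih₁ lam hlam) (ih₂ lam hlam)
  | mul a₁ a₂ ih₁ ih₂ =>
    intro b lam hlam
    have hid : ((a₁*a₂)*b - b*(a₁*a₂)) * lam
        = a₁*((a₂*b - b*a₂)*lam) + ((a₁*b - b*a₁)*lam)*a₂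
          + (a₁*b - b*a₁)*(a₂*lam - lam*a₂) := by noncomm_ring
    rw [hid]
    have hcor : a₂*lam - lam*a₂ ∈ lowerCentral K (FreeAlgebra K (Fin 2)) (k'+3) :=
      lc_succ_mem hlam a₂
    exact add_mem (add_mem (lcsIdeal_mul_left a₁ (ih₂ b lam hlam))
      (lcsIdeal_mul_right a₂ (ih₁ b lam hlam)))
      (lcsIdeal_mul_left _ (lc_le_lcsIdeal hcor))
  | add a₁ a₂ ih₁ ih₂ =>
    intro b lam hlam
    have hid : ((a₁+a₂)*b - b*(a₁+a₂)) * lam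
        = (a₁*b - b*a₁)*lam + (a₂*b - b*a₂)*lam := by noncomm_ring
    rw [hid]; exact add_mem (ih₁ b lam hlam) (ih₂ b lam hlam)

/-- `λ * [a,b] ∈ M (k'+3)` for `λ ∈ L (k'+2)`. -/
lemma s2r (k' : ℕ) (a b : FreeAlgebra K (Fin 2))
    {lam : FreeAlgebra K (Fin 2)} (hlam : lam ∈ lowerCentral K (FreeAlgebra K (Fin 2)) (k'+2)) :
    lam * (a*b - b*a) ∈ lcsIdeal K (FreeAlgebra K (Fin 2)) (k'+3) := by
  have hid : lam * (a*b - b*a)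
      = (a*b - b*a) * lam - ((a*b - b*a)*lam - lam*(a*b - b*a)) := by noncomm_ring
  rw [hid]
  exact sub_mem (s2 k' a b lam hlam) (lc_le_lcsIdeal (lc_succ_mem hlam (a*b - b*a)))

/-- `[M_k, A] ⊆ M_{k+1}` for `k ≥ 2`. -/
lemma tlem (k : ℕ) (hk : 2 ≤ k) {m : FreeAlgebra K (Fin 2)}
    (hm : m ∈ lcsIdeal K (FreeAlgebra K (Fin 2)) k) (e : FreeAlgebra K (Fin 2)) :
    m*e - e*m ∈ lcsIdeal K (FreeAlgebra K (Fin 2)) (k+1) := by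
  obtain ⟨k', rfl⟩ : ∃ k', k = k' + 2 := ⟨k - 2, by omega⟩
  induction hm using Submodule.span_induction with
  | mem x hx =>
    obtain ⟨a, b, l, hl, rfl⟩ := hx
    have hid : (a*l*b)*e - e*(a*l*b)
        = a*(l*(b*e - e*b)) + a*(l*e - e*l)*b + ((a*e - e*a)*l)*b := by noncomm_ring
    rw [hid]
    have h1 : l*(b*e - e*b) ∈ lcsIdeal K (FreeAlgebra K (Fin 2)) (k'+3) := s2r k' b e hl
    have h2 : l*e - e*l ∈ lowerCentral K (FreeAlgebra K (Fin 2)) (k'+3) := by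
      have := lc_succ_mem hl e
      have hng : l*e - e*l = -(e*l - l*e) := by noncomm_ring
      rw [hng]; exact neg_mem this
    have h3 : (a*e - e*a)*l ∈ lcsIdeal K (FreeAlgebra K (Fin 2)) (k'+3) := s2 k' a e l hl
    exact add_mem (add_mem (lcsIdeal_mul_left a h1) (mem_lcsIdeal h2 a b))
      (lcsIdeal_mul_right b h3)
  | zero =>
    have h0 : (0:FreeAlgebra K (Fin 2))*e - e*0 = 0 := by noncomm_ring
    rw [h0]; exact zero_mem _
  | add x y _ _ ihx ihy =>
    have h : (x+y)*e - e*(x+y) = (x*e - e*x) + (y*e - e*y) := by noncomm_ring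
    rw [h]; exact add_mem ihx ihy
  | smul r x _ ihx =>
    rw [smul_comm' e r x]; exact Submodule.smul_mem _ _ ihx

/-- Main lemma: `[M_k, L_{j'+1}] ⊆ M_{k+j'+1}`. -/
lemma mainD (j' : ℕ) : ∀ k : ℕ, 2 ≤ k →
    ∀ m ∈ lcsIdeal K (FreeAlgebra K (Fin 2)) k,
    ∀ l ∈ lowerCentral K (FreeAlgebra K (Fin 2)) (j'+1),
      m*l - l*m ∈ lcsIdeal K (FreeAlgebra K (Fin 2)) (k+j'+1) := by
  induction j' with
  | zero => intro k hk m hm l _; exact tlem k hk hm l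
  | succ j' ih =>
    intro k hk m hm l' hl'
    rw [lc_eq] at hl'
    induction hl' using Submodule.span_induction with
    | mem x hx =>
      obtain ⟨e, l, hl, rfl⟩ := hx
      have hid : m*(e*l - l*e) - (e*l - l*e)*m
          = ((m*e - e*m)*l - l*(m*e - e*m))
            - ((m*l - l*m)*e - e*(m*l - l*m)) := by noncomm_ring
      rw [hid]
      have h1 : (m*e - e*m)*l - l*(m*e - e*m)
          ∈ lcsIdeal K (FreeAlgebra K (Fin 2)) (k+1+j'+1) :=
        ih (k+1) (by omega) _ (tlem k hk hm e) l hl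
      have hidx : k+1+j'+1 = k+(j'+1)+1 := by omega
      rw [hidx] at h1
      have h2 : (m*l - l*m)*e - e*(m*l - l*m)
          ∈ lcsIdeal K (FreeAlgebra K (Fin 2)) (k+j'+1+1) :=
        tlem (k+j'+1) (by omega) (ih k hk m hm l hl) e
      exact sub_mem h1 h2
    | zero =>
      have h0 : m*(0:FreeAlgebra K (Fin 2)) - 0*m = 0 := by noncomm_ring
      rw [h0]; exact zero_mem _
    | add x y _ _ ihx ihy =>
      have h : m*(x+y) - (x+y)*m = (m*x - x*m) + (m*y - y*m) := by noncomm_ring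
      rw [h]; exact add_mem ihx ihy
    | smul r x _ ihx =>
      rw [comm_smul m r x]; exact Submodule.smul_mem _ _ ihx

end Two

/-- for all `k ≥ 2` and `j ≥ 1`, `[M_k(A_2), L_j(A_2)] ⊆ M_{k+j}(A_2)`, i.e.
the `K`-span of all brackets `⁅m, l⁆ = m * l - l * m` with `m ∈ M_k(A_2)` and
`l ∈ L_j(A_2)` is contained in `M_{k+j}(A_2)`. -/
theorem bracket_with_Lj_two_generators
    (K : Type*) [Field K] [CharZero K]
    (k j : ℕ) (hk : 2 ≤ k) (hj : 1 ≤ j) :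
    Submodule.span K {x : FreeAlgebra K (Fin 2) |
        ∃ m ∈ lcsIdeal K (FreeAlgebra K (Fin 2)) k,
          ∃ l ∈ lowerCentral K (FreeAlgebra K (Fin 2)) j, x = m * l - l * m} ≤
      lcsIdeal K (FreeAlgebra K (Fin 2)) (k + j) := by
  obtain ⟨j', rfl⟩ : ∃ j', j = j' + 1 := ⟨j - 1, by omega⟩
  rw [Submodule.span_le]
  rintro x ⟨m, hm, l, hl, rfl⟩
  have h := mainD j' k hk m hm l hl
  have hidx : k + j' + 1 = k + (j' + 1) := by omega
  rwa [hidx] at h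
end

section
/- Let n ≥ 3 and let i, j ≥ 2 be integers of different parity (one even, one odd). Then the product of ideals M_i(A_n)·M_j(A_n) is NOT contained in M_{i+j}(A_n). -/
/-!
The coproduct `δ : A_n → A_n ⊗ A_n`, `x ↦ x ⊗ 1 + 1 ⊗ x`, with `A_n ⊗ A_n` realised as the monoid
algebra of `F × F` for the free monoid `F`, sends `M_d` (`d ≥ 2`) into the span of the bi-words
`(p, q)` with `|p| + |q| > d`, or `|p| + |q| = d` and `p` or `q` empty. Indeed, bracketing raises
this filtration by one, since a bi-word of length one and a bi-word of length `d` with an empty side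
either commute or multiply to bi-words that still have an empty side.

On the other hand `U = ad_a^{i-1} b ∈ L_i` and `V = ad_a^{j-1} b ∈ L_j` are primitive, so
`δ(UV) = δU δV` has coefficient `U(u) V(v) + V(u) U(v)` at the mixed bi-word
`(u, v) = (a^{i-1} b, a^{j-1} b)` of length `i + j`. This coefficient is `1`, because `U` and `V`
are homogeneous of the distinct degrees `i ≠ j`. Hence `UV ∈ M_i M_j` lies outside `M_{i+j}`.
-/
section LowerCentral

variable {K R B : Type*} [CommRing K] [Ring R] [Algebra K R] [Ring B] [Algebra K B]

def adPow (x y : R) : ℕ → R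
  | 0 => y
  | k + 1 => x * adPow x y k - adPow x y k * x

theorem adPow_mem_lowerCentral (x y : R) : ∀ k, adPow x y k ∈ lowerCentral K R (k + 1)
  | 0 => by rw [lowerCentral]; trivial
  | k + 1 => by
    rw [lowerCentral]
    exact Submodule.subset_span ⟨x, _, adPow_mem_lowerCentral x y k, rfl⟩

theorem lowerCentral_le_lcsIdeal (k : ℕ) : lowerCentral K R k ≤ lcsIdeal K R k :=
  fun l hl ↦ Submodule.subset_span ⟨1, 1, l, hl, by simp⟩

theorem lowerCentral_add_two_le {k : ℕ} {P Q : Submodule K R} (hP : lowerCentral K R (k + 1) ≤ P)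
    (hQ : ∀ z, ∀ x ∈ P, z * x - x * z ∈ Q) : lowerCentral K R (k + 2) ≤ Q := by
  rw [lowerCentral, Submodule.span_le]
  rintro _ ⟨a, l, hl, rfl⟩
  exact hQ a l (hP hl)

theorem lcsIdeal_le {k : ℕ} {P : Submodule K R} (hL : lowerCentral K R k ≤ P)
    (hP : ∀ x ∈ P, ∀ y z, y * x * z ∈ P) : lcsIdeal K R k ≤ P := by
  rw [lcsIdeal, Submodule.span_le]
  rintro _ ⟨a, b, l, hl, rfl⟩
  exact hP l (hL hl) a b

theorem map_lowerCentral_le (f : R →ₐ[K] B) :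
    ∀ k, (lowerCentral K R k).map f.toLinearMap ≤ lowerCentral K B k
  | 0 => le_top
  | 1 => le_top
  | k + 2 => by
    rw [lowerCentral, lowerCentral, Submodule.map_span_le]
    rintro _ ⟨a, l, hl, rfl⟩
    exact Submodule.subset_span ⟨f a, f l, map_lowerCentral_le f (k + 1) ⟨l, hl, rfl⟩, by simp⟩

theorem map_lcsIdeal_le (f : R →ₐ[K] B) (k : ℕ) :
    (lcsIdeal K R k).map f.toLinearMap ≤ lcsIdeal K B k := by
  rw [lcsIdeal, lcsIdeal, Submodule.map_span_le]
  rintro _ ⟨a, b, l, hl, rfl⟩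
  exact Submodule.subset_span ⟨f a, f b, f l, map_lowerCentral_le f k ⟨l, hl, rfl⟩, by simp⟩

end LowerCentral

section AdPow

variable {R B F : Type*} [Ring R] [Ring B] [FunLike F R B] [RingHomClass F R B]

theorem map_adPow (f : F) (x y : R) (k : ℕ) : f (adPow x y k) = adPow (f x) (f y) k := by
  induction k with
  | zero => rfl
  | succ k ih => simp only [adPow, map_sub, map_mul, ih]

theorem adPow_add_of_commute (f g : F) (hfg : ∀ a b, Commute (f a) (g b)) (x y : R) (k : ℕ) :
    adPow (f x + g x) (f y + g y) k = f (adPow x y k) + g (adPow x y k) := by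
  induction k with
  | zero => rfl
  | succ k ih =>
    simp only [adPow, ih, map_sub, map_mul, add_mul, mul_add, (hfg x _).eq, (hfg _ x).eq]
    abel

end AdPow

namespace MonoidAlgebra

open Pointwise

variable {R M : Type*} [CommRing R]

theorem supported_univ : supported R R (Set.univ : Set M) = ⊤ :=
  eq_top_iff.2 fun _ _ ↦ mem_supported.2 (Set.subset_univ _)

variable [Monoid M]

theorem mul_mem_supported_mul {S T : Set M} {x y : MonoidAlgebra R M}
    (hx : x ∈ supported R R S) (hy : y ∈ supported R R T) : x * y ∈ supported R R (S * T) := by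
  classical
  exact (Finset.coe_subset.2 (support_coeff_mul_subset x y)).trans
    (by simpa using Set.mul_subset_mul hx hy)

theorem commutator_mem_supported {S T : Set M}
    (h : ∀ m, ∀ s ∈ S, Commute m s ∨ m * s ∈ T ∧ s * m ∈ T) (z : MonoidAlgebra R M)
    {x : MonoidAlgebra R M} (hx : x ∈ supported R R S) : z * x - x * z ∈ supported R R T := by
  let B := LinearMap.mul R (MonoidAlgebra R M) - (LinearMap.mul R (MonoidAlgebra R M)).flip
  suffices Submodule.map₂ B ⊤ (supported R R S) ≤ supported R R T from
    this (Submodule.apply_mem_map₂ B Submodule.mem_top hx)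
  rw [← supported_univ, supported_eq_span_single, supported_eq_span_single,
    Submodule.map₂_span_span, Submodule.span_le]
  rintro _ ⟨_, ⟨m, -, rfl⟩, _, ⟨s, hs, rfl⟩, rfl⟩
  simp only [B, LinearMap.sub_apply, LinearMap.mul_apply', LinearMap.flip_apply, single_mul_single,
    one_mul, SetLike.mem_coe]
  rcases h m s hs with hc | ⟨hms, hsm⟩
  · simp [hc.eq]
  · exact sub_mem (Finsupp.single_mem_supported R 1 hms) (Finsupp.single_mem_supported R 1 hsm)

variable {N : Type*} [Monoid N]

noncomputable def inlAlgHom : MonoidAlgebra R M →ₐ[R] MonoidAlgebra R (M × N) :=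
  mapDomainAlgHom R R (MonoidHom.inl M N)

noncomputable def inrAlgHom : MonoidAlgebra R N →ₐ[R] MonoidAlgebra R (M × N) :=
  mapDomainAlgHom R R (MonoidHom.inr M N)

@[simp]
theorem inlAlgHom_single (m : M) (r : R) :
    (inlAlgHom (single m r) : MonoidAlgebra R (M × N)) = single (m, 1) r := by
  simp [inlAlgHom]

@[simp]
theorem inrAlgHom_single (n : N) (r : R) :
    (inrAlgHom (single n r) : MonoidAlgebra R (M × N)) = single (1, n) r := by
  simp [inrAlgHom]

theorem coeff_inlAlgHom_of_ne_one (x : MonoidAlgebra R M) {p : M} {q : N} (hq : q ≠ 1) :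
    (inlAlgHom x).coeff (p, q) = 0 :=
  Finsupp.mapDomain_of_notMem_range _ _ fun ⟨_, h⟩ ↦ hq (congrArg Prod.snd h).symm

theorem coeff_inrAlgHom_of_ne_one (y : MonoidAlgebra R N) {p : M} {q : N} (hp : p ≠ 1) :
    (inrAlgHom y).coeff (p, q) = 0 :=
  Finsupp.mapDomain_of_notMem_range _ _ fun ⟨_, h⟩ ↦ hp (congrArg Prod.fst h).symm

theorem commute_inlAlgHom_inrAlgHom (x : MonoidAlgebra R M) (y : MonoidAlgebra R N) :
    Commute (inlAlgHom x) (inrAlgHom y) := by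
  induction x using induction_linear with
  | zero => simp
  | add x₁ x₂ h₁ h₂ => rw [map_add]; exact h₁.add_left h₂
  | single m r =>
    induction y using induction_linear with
    | zero => simp
    | add y₁ y₂ h₁ h₂ => rw [map_add]; exact h₁.add_right h₂
    | single n s => simp [Commute, SemiconjBy, single_mul_single, mul_comm r]

theorem coeff_inlAlgHom_mul_inrAlgHom (x : MonoidAlgebra R M) (y : MonoidAlgebra R N) (p : M)
    (q : N) : (inlAlgHom x * inrAlgHom y).coeff (p, q) = x.coeff p * y.coeff q := by
  classical
  induction x using induction_linear with
  | zero => simp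
  | add x₁ x₂ h₁ h₂ => rw [map_add, add_mul, coeff_add, Finsupp.add_apply, h₁, h₂]; simp [add_mul]
  | single m r =>
    induction y using induction_linear with
    | zero => simp
    | add y₁ y₂ h₁ h₂ => rw [map_add, mul_add, coeff_add, Finsupp.add_apply, h₁, h₂]; simp [mul_add]
    | single n s =>
      simp only [inlAlgHom_single, inrAlgHom_single, single_mul_single, Prod.mk_mul_mk, mul_one,
        one_mul, coeff_single, Finsupp.single_apply, Prod.mk.injEq]
      split_ifs <;> simp_all

theorem coeff_primitive_mul_primitive (x y : MonoidAlgebra R M) {p q : M} (hp : p ≠ 1)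
    (hq : q ≠ 1) :
    ((inlAlgHom x + inrAlgHom x) * (inlAlgHom y + inrAlgHom y)).coeff (p, q) =
      x.coeff p * y.coeff q + y.coeff p * x.coeff q := by
  rw [add_mul, mul_add, mul_add, (commute_inlAlgHom_inrAlgHom y x).symm.eq, ← map_mul, ← map_mul]
  simp only [coeff_add, Finsupp.add_apply, coeff_inlAlgHom_of_ne_one _ hq,
    coeff_inrAlgHom_of_ne_one _ hp, coeff_inlAlgHom_mul_inrAlgHom, zero_add, add_zero]

end MonoidAlgebra

theorem Prod.commute_or_unmixed_mul {M N : Type*} [Monoid M] [Monoid N] {m s : M × N}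
    (hm : m.1 = 1 ∨ m.2 = 1) (hs : s.1 = 1 ∨ s.2 = 1) :
    Commute m s ∨ ((m * s).1 = 1 ∨ (m * s).2 = 1) ∧ ((s * m).1 = 1 ∨ (s * m).2 = 1) := by
  obtain ⟨p, q⟩ := m
  obtain ⟨p', q'⟩ := s
  rcases hm with rfl | rfl <;> rcases hs with rfl | rfl <;> simp [Commute, SemiconjBy]

namespace FreeMonoid

open MonoidAlgebra

variable {X : Type*}

def biLength (m : FreeMonoid X × FreeMonoid X) : ℕ := m.1.length + m.2.length

@[simp]
theorem biLength_mul (m m' : FreeMonoid X × FreeMonoid X) :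
    biLength (m * m') = biLength m + biLength m' := by
  simp only [biLength, Prod.fst_mul, Prod.snd_mul, length_mul]
  omega

theorem biLength_eq_zero {m : FreeMonoid X × FreeMonoid X} : biLength m = 0 ↔ m = 1 := by
  simp [biLength, Prod.ext_iff]

theorem unmixed_of_biLength_eq_one {m : FreeMonoid X × FreeMonoid X} (h : biLength m = 1) :
    m.1 = 1 ∨ m.2 = 1 := by
  simp only [biLength] at h
  simp only [← length_eq_zero]
  omega

def highOrUnmixed (d : ℕ) : Set (FreeMonoid X × FreeMonoid X) :=
  {m | d < biLength m ∨ biLength m = d ∧ (m.1 = 1 ∨ m.2 = 1)}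

theorem mk_notMem_highOrUnmixed {p q : FreeMonoid X} (hp : p ≠ 1) (hq : q ≠ 1) :
    (p, q) ∉ highOrUnmixed (p.length + q.length) := by
  simp [highOrUnmixed, biLength, hp, hq]

theorem insert_one_highOrUnmixed_one :
    insert 1 (highOrUnmixed 1) = (Set.univ : Set (FreeMonoid X × FreeMonoid X)) := by
  refine Set.eq_univ_of_forall fun m ↦ ?_
  rcases Nat.lt_or_ge 1 (biLength m) with h | h
  · exact Or.inr (Or.inl h)
  · rcases Nat.le_one_iff_eq_zero_or_eq_one.1 h with h | h
    · exact Or.inl (biLength_eq_zero.1 h)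
    · exact Or.inr (Or.inr ⟨h, unmixed_of_biLength_eq_one h⟩)

theorem mul_mem_highOrUnmixed_mul {d : ℕ} {s : FreeMonoid X × FreeMonoid X}
    (hs : s ∈ highOrUnmixed d) (m m' : FreeMonoid X × FreeMonoid X) :
    m * s * m' ∈ highOrUnmixed d := by
  have hd : d ≤ biLength s := by rcases hs with h | h <;> omega
  by_cases h : biLength m + biLength m' = 0
  · obtain ⟨rfl, rfl⟩ : m = 1 ∧ m' = 1 := by simpa [biLength_eq_zero] using h
    simpa using hs
  · left
    simp only [biLength_mul]
    omega

-- The unit is allowed in `s` because `L_1 = ⊤` contains the constants, which lie in no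
-- `highOrUnmixed d` with `d ≥ 1` but are central.
theorem commute_or_mul_mem_highOrUnmixed_succ {d : ℕ} {s : FreeMonoid X × FreeMonoid X}
    (hs : s ∈ insert 1 (highOrUnmixed d)) (m : FreeMonoid X × FreeMonoid X) :
    Commute m s ∨ m * s ∈ highOrUnmixed (d + 1) ∧ s * m ∈ highOrUnmixed (d + 1) := by
  rcases hs with rfl | hs
  · exact Or.inl (Commute.one_right m)
  rcases eq_or_ne m 1 with rfl | hm
  · exact Or.inl (Commute.one_left s)
  have hm_pos : 0 < biLength m := Nat.pos_of_ne_zero (biLength_eq_zero.not.2 hm)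
  by_cases hlong : d + 1 < biLength m + biLength s
  · right
    simp only [highOrUnmixed, Set.mem_ofPred_eq, biLength_mul]
    omega
  · have hs_len : biLength s = d := by rcases hs with h | h <;> omega
    have hm_len : biLength m = 1 := by omega
    refine (Prod.commute_or_unmixed_mul (unmixed_of_biLength_eq_one hm_len)
      (hs.resolve_left (by omega)).2).imp_right fun h ↦ ⟨Or.inr ⟨?_, h.1⟩, Or.inr ⟨?_, h.2⟩⟩ <;>
    simp only [biLength_mul] <;> omega

variable {R : Type*} [CommRing R]

theorem adPow_single_mem_supported_length (a b : X) (k : ℕ) :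
    adPow (single (of a) (1 : R)) (single (of b) 1) k ∈
      supported R R {w : FreeMonoid X | w.length = k + 1} := by
  have hmul {p q : ℕ} {x y : MonoidAlgebra R (FreeMonoid X)}
      (hx : x ∈ supported R R {w | w.length = p}) (hy : y ∈ supported R R {w | w.length = q}) :
      x * y ∈ supported R R {w | w.length = p + q} := by
    refine supported_mono ?_ (mul_mem_supported_mul hx hy)
    rintro _ ⟨u, hu, v, hv, rfl⟩
    simp_all [length_mul]
  have ha : single (of a) (1 : R) ∈ supported R R {w : FreeMonoid X | w.length = 1} :=
    Finsupp.single_mem_supported R 1 (length_of a)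
  induction k with
  | zero => exact Finsupp.single_mem_supported R 1 (length_of b)
  | succ k ih =>
    exact sub_mem (by simpa [add_comm] using hmul ha ih) (hmul ih ha)

theorem coeff_adPow_single (a b : X) (hab : a ≠ b) (k : ℕ) :
    (adPow (single (of a) (1 : R)) (single (of b) 1) k).coeff
      (ofList (List.replicate k a ++ [b])) = 1 := by
  induction k with
  | zero => simp [adPow]
  | succ k ih =>
    have hlast (d : FreeMonoid X) : d * of a ≠ ofList (List.replicate (k + 1) a ++ [b]) :=
      fun h ↦ hab (by simpa using congrArg (fun w ↦ w.toList.getLast?) h)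
    have hcons : ofList (List.replicate (k + 1) a ++ [b]) =
        of a * ofList (List.replicate k a ++ [b]) := rfl
    rw [adPow, coeff_sub, Finsupp.sub_apply, coeff_mul_single_of_forall_mul_ne _ _ hlast, hcons,
      coeff_single_mul_mul, ih, mul_one, sub_zero]

end FreeMonoid

open MonoidAlgebra FreeMonoid

section Coproduct

variable (K X : Type*) [CommRing K]

noncomputable def coproduct : FreeAlgebra K X →ₐ[K] MonoidAlgebra K (FreeMonoid X × FreeMonoid X) :=
  FreeAlgebra.lift K fun x ↦ inlAlgHom (single (of x) 1) + inrAlgHom (single (of x) 1)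

variable {K X}

theorem coproduct_adPow (a b : X) (k : ℕ) :
    coproduct K X (adPow (FreeAlgebra.ι K a) (FreeAlgebra.ι K b) k) =
      inlAlgHom (adPow (single (of a) 1) (single (of b) 1) k) +
        inrAlgHom (adPow (single (of a) 1) (single (of b) 1) k) := by
  rw [map_adPow, coproduct, FreeAlgebra.lift_ι_apply, FreeAlgebra.lift_ι_apply]
  exact adPow_add_of_commute inlAlgHom inrAlgHom commute_inlAlgHom_inrAlgHom _ _ k

theorem lowerCentral_le_supported_highOrUnmixed (k : ℕ) :
    lowerCentral K (MonoidAlgebra K (FreeMonoid X × FreeMonoid X)) (k + 2) ≤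
      supported K K (highOrUnmixed (k + 2)) := by
  have step (d : ℕ) (z x : MonoidAlgebra K (FreeMonoid X × FreeMonoid X))
      (hx : x ∈ supported K K (insert 1 (highOrUnmixed d))) :
      z * x - x * z ∈ supported K K (highOrUnmixed (d + 1)) :=
    commutator_mem_supported (fun m _ hs ↦ commute_or_mul_mem_highOrUnmixed_succ hs m) z hx
  induction k with
  | zero =>
    refine lowerCentral_add_two_le ?_ (step 1)
    rw [insert_one_highOrUnmixed_one, supported_univ]
    exact le_top
  | succ k ih =>
    exact lowerCentral_add_two_le (ih.trans (supported_mono (Set.subset_insert _ _))) (step (k + 2))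

theorem lcsIdeal_le_supported_highOrUnmixed (k : ℕ) :
    lcsIdeal K (MonoidAlgebra K (FreeMonoid X × FreeMonoid X)) (k + 2) ≤
      supported K K (highOrUnmixed (k + 2)) := by
  refine lcsIdeal_le (lowerCentral_le_supported_highOrUnmixed k) fun x hx y z ↦ ?_
  have hall (w : MonoidAlgebra K (FreeMonoid X × FreeMonoid X)) : w ∈ supported K K Set.univ := by
    simp [supported_univ]
  refine supported_mono ?_ (mul_mem_supported_mul (mul_mem_supported_mul (hall y) hx) (hall z))
  rintro _ ⟨_, ⟨m, -, s, hs, rfl⟩, m', -, rfl⟩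
  exact mul_mem_highOrUnmixed_mul hs m m'

end Coproduct

theorem not_contained_different_parity_general
    (K : Type*) [Field K]
    (n : ℕ) (hn : 3 ≤ n) (i j : ℕ) (hi : 2 ≤ i) (hj : 2 ≤ j)
    (hpar : i % 2 ≠ j % 2) :
    ¬ lcsIdeal K (FreeAlgebra K (Fin n)) i * lcsIdeal K (FreeAlgebra K (Fin n)) j ≤
        lcsIdeal K (FreeAlgebra K (Fin n)) (i + j) := by
  intro hcont
  obtain ⟨a, b, hab⟩ : ∃ a b : Fin n, a ≠ b := ⟨⟨0, by omega⟩, ⟨1, by omega⟩, by simp [Fin.ext_iff]⟩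
  obtain ⟨i, rfl⟩ : ∃ i', i = i' + 1 := ⟨i - 1, by omega⟩
  obtain ⟨j, rfl⟩ : ∃ j', j = j' + 1 := ⟨j - 1, by omega⟩
  let U k := adPow (FreeAlgebra.ι K a) (FreeAlgebra.ι K b) k
  let W k := adPow (single (of a) (1 : K)) (single (of b) 1) k
  let w k : FreeMonoid (Fin n) := ofList (List.replicate k a ++ [b])
  have hlen k : (w k).length = k + 1 := by simp [w, FreeMonoid.length]
  have hw k : w k ≠ 1 := by simp [← length_eq_zero, hlen]
  have hUV : U i * U j ∈ lcsIdeal K _ (i + j + 2) := by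
    rw [show i + j + 2 = i + 1 + (j + 1) by ring]
    exact hcont (Submodule.mul_mem_mul (lowerCentral_le_lcsIdeal _ (adPow_mem_lowerCentral _ _ _))
      (lowerCentral_le_lcsIdeal _ (adPow_mem_lowerCentral _ _ _)))
  have hzero : (coproduct K _ (U i * U j)).coeff (w i, w j) = 0 := by
    refine mem_supported'.1 (lcsIdeal_le_supported_highOrUnmixed _
      (map_lcsIdeal_le (coproduct K _) _ ⟨_, hUV, rfl⟩)) _ ?_
    simpa [hlen, add_add_add_comm] using mk_notMem_highOrUnmixed (hw i) (hw j)
  have hcross : (W j).coeff (w i) = 0 :=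
    mem_supported'.1 (adPow_single_mem_supported_length a b j) _ (by rw [Set.mem_ofPred_eq, hlen]; omega)
  have hone : (coproduct K _ (U i * U j)).coeff (w i, w j) = 1 := by
    rw [map_mul, coproduct_adPow, coproduct_adPow, coeff_primitive_mul_primitive _ _ (hw i) (hw j),
      coeff_adPow_single a b hab, coeff_adPow_single a b hab, hcross]
    simp
  exact zero_ne_one (hzero.symm.trans hone)

/-- Theorem 5.1, different parity: for `n ≥ 3` and `i, j ≥ 2` of different
parity, `M_i(A_n) · M_j(A_n)` is not contained in `M_{i+j}(A_n)`. -/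
theorem not_contained_different_parity
    (K : Type*) [Field K] [CharZero K]
    (n : ℕ) (hn : 3 ≤ n) (i j : ℕ) (hi : 2 ≤ i) (hj : 2 ≤ j)
    (hpar : i % 2 ≠ j % 2) :
    ¬ lcsIdeal K (FreeAlgebra K (Fin n)) i * lcsIdeal K (FreeAlgebra K (Fin n)) j ≤
        lcsIdeal K (FreeAlgebra K (Fin n)) (i + j) :=
  not_contained_different_parity_general K n hn i j hi hj hpar
end
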